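/- Higher-order vakonomic Herglotz principle for second-order field Lagrangians, multiplier form: Let U ⊆ ℝᵐ be open and convex, let L be a second-order field Lagrangian, and let u : ℝᵐ → ℝⁿ and z : ℝᵐ → ℝᵐ be smooth maps satisfying the constraint Σ_μ ∂z^μ/∂x^μ(x) = L(j(x)) on U, where j is the second-jet prolongation of (u, z). Write g_μ(x) = ∂L/∂z^μ(j(x)) and T_μ f = ∂f/∂x^μ − g_μ·f. Then the following are equivalent: (1) there exists a smooth λ : U → ℝ with λ(x) ≠ 1 for all x ∈ U such that, on U, ∂λ/∂x^ν = (1 − λ)·g_ν for all ν, and for every a: (1 − λ)·∂L/∂u^a(j(·)) − Σ_μ ∂/∂x^μ[(1 − λ)·∂L/∂w^a_μ(j(·))] + Σ_{|I|=2} ∂_I[(1 − λ)·∂L/∂W^a_I(j(·))] = 0; (2) the closed action dependence condition ∂g_μ/∂x^ν = ∂g_ν/∂x^μ holds on U, and the second-order Herglotz field equations hold on U: for every a, ∂L/∂u^a(j(·)) − Σ_μ T_μ(∂L/∂w^a_μ(j(·))) + Σ_{|I|=2} T_I(∂L/∂W^a_I(j(·))) = 0, where for a multi-index I = 2e_μ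 one sets T_I = T_μ ∘ T_μ and ∂_I = ∂_μ ∂_μ, and for I = e_μ + e_ν with μ ≠ ν one sets T_I = T_μ ∘ T_ν and ∂_I = ∂_μ ∂_ν. -/

import Mathlib

open Set Finset

/-- Partial derivative of `F : ℝᵐ → ℝ` in the `μ`-th coordinate direction. -/
noncomputable def pd {m : ℕ} (μ : Fin m) (F : (Fin m → ℝ) → ℝ) (x : Fin m → ℝ) : ℝ :=
  fderiv ℝ F x (Pi.single μ (1 : ℝ))

/-- The space of second-jet variables `(x, u, w, W, z)` of a second-order field
theory.  Multi-indices `I` of length `2` are encoded as ordered pairs `(μ, ν)`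
with `μ ≤ ν`; the `W`-slot carries the variables `W^a_{μν}`. -/
abbrev Jet2 (m n : ℕ) :=
  (Fin m → ℝ) × (Fin n → ℝ) × (Fin n → Fin m → ℝ) ×
    (Fin n → Fin m → Fin m → ℝ) × (Fin m → ℝ)

/-- Second-jet prolongation `j(x) = (x, u(x), ∂u(x), ∂²u(x), z(x))` of `(u, z)`. -/
noncomputable def jet2 {m n : ℕ} (u : (Fin m → ℝ) → Fin n → ℝ)
    (z : (Fin m → ℝ) → Fin m → ℝ) (x : Fin m → ℝ) : Jet2 m n :=
  (x, u x, fun a μ => pd μ (fun y => u y a) x,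
    fun a μ ν => pd μ (fun y => pd ν (fun y' => u y' a) y) x, z x)

/-- Partial derivative `∂L/∂u^a` of a second-order field Lagrangian. -/
noncomputable def Lu {m n : ℕ} (L : Jet2 m n → ℝ) (a : Fin n) (p : Jet2 m n) : ℝ :=
  fderiv ℝ L p (0, Pi.single a (1 : ℝ), 0, 0, 0)

/-- Partial derivative `∂L/∂w^a_μ` of a second-order field Lagrangian. -/
noncomputable def Lw {m n : ℕ} (L : Jet2 m n → ℝ) (a : Fin n) (μ : Fin m)
    (p : Jet2 m n) : ℝ :=
  fderiv ℝ L p (0, 0, Pi.single a (Pi.single μ (1 : ℝ)), 0, 0)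

/-- Partial derivative `∂L/∂W^a_I` of a second-order field Lagrangian, for the
multi-index `I` encoded by the pair `(μ, ν)`. -/
noncomputable def LW {m n : ℕ} (L : Jet2 m n → ℝ) (a : Fin n) (μ ν : Fin m)
    (p : Jet2 m n) : ℝ :=
  fderiv ℝ L p (0, 0, 0, Pi.single a (Pi.single μ (Pi.single ν (1 : ℝ))), 0)

/-- Partial derivative `∂L/∂z^μ` of a second-order field Lagrangian. -/
noncomputable def Lz {m n : ℕ} (L : Jet2 m n → ℝ) (μ : Fin m) (p : Jet2 m n) : ℝ :=
  fderiv ℝ L p (0, 0, 0, 0, Pi.single μ (1 : ℝ))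

/-- The Herglotz operator `T_μ f = ∂f/∂x^μ − g_μ·f` along a section with
dissipation coefficients `g_μ`. -/
noncomputable def T {m : ℕ} (g : (Fin m → ℝ) → Fin m → ℝ) (μ : Fin m)
    (f : (Fin m → ℝ) → ℝ) : (Fin m → ℝ) → ℝ :=
  fun x => pd μ f x - g x μ * f x

lemma pd_contDiff {m : ℕ} {μ : Fin m} {F : (Fin m → ℝ) → ℝ}
    (hF : ContDiff ℝ (⊤ : ℕ∞) F) : ContDiff ℝ (⊤ : ℕ∞) (pd μ F) :=
  (hF.fderiv_right (by simp)).clm_apply contDiff_const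

lemma pd_congr {m : ℕ} {μ : Fin m} {f g : (Fin m → ℝ) → ℝ} {x : Fin m → ℝ}
    (h : f =ᶠ[nhds x] g) : pd μ f x = pd μ g x := by
  unfold pd; rw [h.fderiv_eq]

lemma pd_mul {m : ℕ} {μ : Fin m} {f g : (Fin m → ℝ) → ℝ} {x : Fin m → ℝ}
    (hf : DifferentiableAt ℝ f x) (hg : DifferentiableAt ℝ g x) :
    pd μ (fun y => f y * g y) x = pd μ f x * g x + f x * pd μ g x := by
  unfold pd; rw [fderiv_fun_mul hf hg]; simp; ring

lemma pd_comm {m : ℕ} {F : (Fin m → ℝ) → ℝ} {x : Fin m → ℝ}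
    (hF : ContDiffAt ℝ 2 F x) (μ ν : Fin m) :
    pd μ (pd ν F) x = pd ν (pd μ F) x := by
  have hsym := hF.isSymmSndFDerivAt (by simp [minSmoothness_of_isRCLikeNormedField])
  have hd : DifferentiableAt ℝ (fderiv ℝ F) x :=
    (hF.fderiv_right (m := 1) (by exact_mod_cast one_add_one_eq_two.le)).differentiableAt one_ne_zero
  have key : ∀ a b : Fin m, pd a (pd b F) x
      = fderiv ℝ (fderiv ℝ F) x (Pi.single a 1) (Pi.single b 1) := by
    intro a b
    have h1 : pd b F = fun y =>
        (ContinuousLinearMap.apply ℝ ℝ (Pi.single b (1:ℝ))) (fderiv ℝ F y) := rfl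
    have h2 : HasFDerivAt (fun y =>
        (ContinuousLinearMap.apply ℝ ℝ (Pi.single b (1:ℝ))) (fderiv ℝ F y))
        ((ContinuousLinearMap.apply ℝ ℝ (Pi.single b (1:ℝ))).comp
          (fderiv ℝ (fderiv ℝ F) x)) x :=
      ((ContinuousLinearMap.apply ℝ ℝ (Pi.single b (1:ℝ))).hasFDerivAt.comp x
        hd.hasFDerivAt :)
    rw [show pd a (pd b F) x = fderiv ℝ (pd b F) x (Pi.single a 1) from rfl, h1,
      h2.fderiv]
    rfl
  rw [key, key, hsym.eq]

lemma pd_one_sub {m : ℕ} {μ : Fin m} {lam : (Fin m → ℝ) → ℝ} {x : Fin m → ℝ}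
    (h : DifferentiableAt ℝ lam x) :
    pd μ (fun y => 1 - lam y) x = - pd μ lam x := by
  unfold pd
  rw [(h.hasFDerivAt.const_sub 1).fderiv]
  simp

/-- Key factorization: if `∂_μ λ = (1-λ) g_μ` at `x`, then
`∂_μ ((1-λ) f) = (1-λ) T_μ f` at `x`. -/
lemma pd_key {m : ℕ} {g : (Fin m → ℝ) → Fin m → ℝ} {μ : Fin m}
    {lam f : (Fin m → ℝ) → ℝ} {x : Fin m → ℝ}
    (hlam : DifferentiableAt ℝ lam x) (hf : DifferentiableAt ℝ f x)
    (hpd : pd μ lam x = (1 - lam x) * g x μ) :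
    pd μ (fun y => (1 - lam y) * f y) x = (1 - lam x) * T g μ f x := by
  rw [pd_mul (f := fun y => 1 - lam y) ((differentiableAt_const (1:ℝ)).sub hlam) hf, pd_one_sub hlam, hpd, T]
  ring

lemma T_contDiff {m : ℕ} {g : (Fin m → ℝ) → Fin m → ℝ} {μ : Fin m}
    {f : (Fin m → ℝ) → ℝ} (hg : ContDiff ℝ (⊤ : ℕ∞) (fun y => g y μ))
    (hf : ContDiff ℝ (⊤ : ℕ∞) f) : ContDiff ℝ (⊤ : ℕ∞) (T g μ f) :=
  (pd_contDiff hf).sub (hg.mul hf)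

lemma EL_factor {m : ℕ} {U : Set (Fin m → ℝ)} (hU : IsOpen U) {x : Fin m → ℝ}
    (hx : x ∈ U) {g : (Fin m → ℝ) → Fin m → ℝ} {lam : (Fin m → ℝ) → ℝ}
    (hlam : ∀ y ∈ U, DifferentiableAt ℝ lam y)
    (hpd : ∀ y ∈ U, ∀ μ : Fin m, pd μ lam y = (1 - lam y) * g y μ)
    (hg : ∀ μ : Fin m, ContDiff ℝ (⊤ : ℕ∞) (fun y => g y μ))
    (f0 : (Fin m → ℝ) → ℝ)
    (fw : Fin m → (Fin m → ℝ) → ℝ) (hfw : ∀ μ, ContDiff ℝ (⊤ : ℕ∞) (fw μ))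
    (fW : Fin m → Fin m → (Fin m → ℝ) → ℝ)
    (hfW : ∀ μ ν, ContDiff ℝ (⊤ : ℕ∞) (fW μ ν)) :
    (1 - lam x) * f0 x - (∑ μ : Fin m, pd μ (fun y => (1 - lam y) * fw μ y) x)
      + (∑ p ∈ Finset.univ.filter (fun p : Fin m × Fin m => p.1 ≤ p.2),
          pd p.1 (fun y => pd p.2 (fun y' => (1 - lam y') * fW p.1 p.2 y') y) x)
    = (1 - lam x) * (f0 x - (∑ μ : Fin m, T g μ (fw μ) x)
      + ∑ p ∈ Finset.univ.filter (fun p : Fin m × Fin m => p.1 ≤ p.2),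
          T g p.1 (T g p.2 (fW p.1 p.2)) x) := by
  have h1 : ∀ μ : Fin m, pd μ (fun y => (1 - lam y) * fw μ y) x
      = (1 - lam x) * T g μ (fw μ) x := fun μ =>
    pd_key (hlam x hx) ((hfw μ).differentiable (by simp) x) (hpd x hx μ)
  have h2 : ∀ p : Fin m × Fin m,
      pd p.1 (fun y => pd p.2 (fun y' => (1 - lam y') * fW p.1 p.2 y') y) x
      = (1 - lam x) * T g p.1 (T g p.2 (fW p.1 p.2)) x := by
    intro p
    have hev : (fun y => pd p.2 (fun y' => (1 - lam y') * fW p.1 p.2 y') y)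
        =ᶠ[nhds x] (fun y => (1 - lam y) * T g p.2 (fW p.1 p.2) y) := by
      filter_upwards [hU.mem_nhds hx] with y hy
      exact pd_key (hlam y hy) ((hfW p.1 p.2).differentiable (by simp) y) (hpd y hy p.2)
    rw [pd_congr hev,
      pd_key (hlam x hx) ((T_contDiff (hg p.2) (hfW p.1 p.2)).differentiable (by simp) x)
        (hpd x hx p.1)]
  rw [Finset.sum_congr rfl fun μ _ => h1 μ, Finset.sum_congr rfl fun p _ => h2 p,
    ← Finset.mul_sum, ← Finset.mul_sum]
  ring

set_option maxHeartbeats 2000000 in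
lemma exists_potential {m : ℕ} {U : Set (Fin m → ℝ)} (hU : IsOpen U)
    (hconv : Convex ℝ U) {g : (Fin m → ℝ) → Fin m → ℝ}
    (hg : ∀ μ : Fin m, ContDiff ℝ (⊤ : ℕ∞) (fun y => g y μ))
    (hclosed : ∀ x ∈ U, ∀ μ ν : Fin m,
      pd ν (fun y => g y μ) x = pd μ (fun y => g y ν) x)
    {x₀ : Fin m → ℝ} (hx₀ : x₀ ∈ U) :
    ∃ φ : (Fin m → ℝ) → ℝ, ContDiffOn ℝ (⊤ : ℕ∞) φ U ∧
      ∀ x ∈ U, HasFDerivAt φ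
        (∑ μ : Fin m, g x μ • (ContinuousLinearMap.proj μ :
          (Fin m → ℝ) →L[ℝ] ℝ)) x := by
  classical
  set ℓ : ℝ → (Fin m → ℝ) → (Fin m → ℝ) := fun t x => x₀ + t • (x - x₀) with hℓdef
  set F : (Fin m → ℝ) → ℝ → ℝ :=
    fun x t => ∑ μ : Fin m, g (ℓ t x) μ * (x μ - x₀ μ) with hFdef
  -- joint smoothness
  have hℓC : ContDiff ℝ (⊤ : ℕ∞) (fun p : (Fin m → ℝ) × ℝ => ℓ p.2 p.1) := by
    exact contDiff_const.add (contDiff_snd.smul (contDiff_fst.sub contDiff_const))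
  have hGC : ContDiff ℝ (⊤ : ℕ∞) (fun p : (Fin m → ℝ) × ℝ => F p.1 p.2) := by
    apply ContDiff.sum
    intro μ _
    exact ((hg μ).comp hℓC).mul
      (((contDiff_pi.1 contDiff_id μ).comp contDiff_fst).sub contDiff_const)
  set F' : (Fin m → ℝ) → ℝ → (Fin m → ℝ) →L[ℝ] ℝ :=
    fun x t => fderiv ℝ (fun y => F y t) x with hF'def
  have hF'C : ContDiff ℝ (⊤ : ℕ∞)
      (fun p : (Fin m → ℝ) × ℝ => F' p.1 p.2) := by
    have := ContDiff.fderiv (𝕜 := ℝ)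
      (f := fun (p : (Fin m → ℝ) × ℝ) (y : Fin m → ℝ) => F y p.2)
      (g := fun p : (Fin m → ℝ) × ℝ => p.1)
      (m := (⊤ : ℕ∞)) (n := (⊤ : ℕ∞))
      (hGC.comp (contDiff_snd.prodMk (contDiff_snd.comp contDiff_fst))) contDiff_fst
      (by simp)
    exact this
  set φ : (Fin m → ℝ) → ℝ := fun x => ∫ t in (0:ℝ)..1, F x t with hφdef
  -- differentiation under the integral sign
  have hD : ∀ x : Fin m → ℝ,
      HasFDerivAt φ (∫ t in (0:ℝ)..1, F' x t) x := by
    intro x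
    have hcont : ∀ y : Fin m → ℝ, Continuous (fun t => F y t) := fun y =>
      hGC.continuous.comp (Continuous.prodMk_right y)
    have hcont' : Continuous (fun t => F' x t) :=
      hF'C.continuous.comp (Continuous.prodMk_right x)
    obtain ⟨C, hC⟩ := ((isCompact_closedBall x 1).prod (isCompact_Icc (a := (0:ℝ))
      (b := 1))).exists_bound_of_continuousOn
      (hF'C.continuous.continuousOn)
    apply intervalIntegral.hasFDerivAt_integral_of_dominated_of_fderiv_le
      (s := Metric.ball x 1) (bound := fun _ => C) (Metric.ball_mem_nhds x one_pos)
    · exact Filter.Eventually.of_forall fun y => (hcont y).aestronglyMeasurable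
    · exact (hcont x).intervalIntegrable 0 1
    · exact hcont'.aestronglyMeasurable
    · apply MeasureTheory.ae_of_all
      intro t ht y hy
      have ht' : t ∈ Set.Icc (0:ℝ) 1 := by
        rw [Set.uIoc_of_le (zero_le_one (α := ℝ))] at ht
        exact Set.Ioc_subset_Icc_self ht
      exact hC (y, t) ⟨Metric.ball_subset_closedBall hy, ht'⟩
    · exact intervalIntegrable_const
    · apply MeasureTheory.ae_of_all
      intro t _ y _
      have : DifferentiableAt ℝ (fun y' => F y' t) y := by
        have : ContDiff ℝ (⊤ : ℕ∞) (fun y' => F y' t) :=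
          hGC.comp (contDiff_id.prodMk contDiff_const)
        exact this.differentiable (by simp) y
      exact this.hasFDerivAt
  -- identification of the derivative on U
  set ω : (Fin m → ℝ) → (Fin m → ℝ) →L[ℝ] ℝ :=
    fun x => ∑ μ : Fin m, g x μ • (ContinuousLinearMap.proj μ : (Fin m → ℝ) →L[ℝ] ℝ) with hωdef
  set Dg : Fin m → (Fin m → ℝ) → ((Fin m → ℝ) →L[ℝ] ℝ) :=
    fun μ y => fderiv ℝ (fun y' => g y' μ) y with hDgdef
  have hF'eq : ∀ (t : ℝ) (y : Fin m → ℝ), F' y t =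
      ∑ μ : Fin m, ((g (ℓ t y) μ) • (ContinuousLinearMap.proj μ : (Fin m → ℝ) →L[ℝ] ℝ)
        + (y μ - x₀ μ) • ((Dg μ (ℓ t y)).comp
            (t • ContinuousLinearMap.id ℝ (Fin m → ℝ)))) := by
    intro t y
    have hterm : ∀ μ : Fin m, HasFDerivAt (fun y' => g (ℓ t y') μ * (y' μ - x₀ μ))
        ((g (ℓ t y) μ) • (ContinuousLinearMap.proj μ : (Fin m → ℝ) →L[ℝ] ℝ)
          + (y μ - x₀ μ) • ((Dg μ (ℓ t y)).comp
              (t • ContinuousLinearMap.id ℝ (Fin m → ℝ)))) y := by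
      intro μ
      have hℓy : HasFDerivAt (fun y' => ℓ t y')
          (t • ContinuousLinearMap.id ℝ (Fin m → ℝ)) y := by
        simpa [hℓdef] using (((hasFDerivAt_id (𝕜 := ℝ) y).sub_const x₀).const_smul t).const_add x₀
      have hgc : HasFDerivAt (fun y' => g y' μ) (Dg μ (ℓ t y)) (ℓ t y) :=
        (((hg μ).differentiable (by simp)) (ℓ t y)).hasFDerivAt
      have h1 : HasFDerivAt (fun y' => g (ℓ t y') μ)
          ((Dg μ (ℓ t y)).comp (t • ContinuousLinearMap.id ℝ (Fin m → ℝ))) y :=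
        hgc.comp y hℓy
      have h2 : HasFDerivAt (fun y' : Fin m → ℝ => y' μ - x₀ μ)
          (ContinuousLinearMap.proj μ : (Fin m → ℝ) →L[ℝ] ℝ) y := by
        simpa using ((ContinuousLinearMap.proj (R := ℝ)
          (φ := fun _ : Fin m => ℝ) μ).hasFDerivAt (x := y)).sub_const (x₀ μ)
      exact h1.mul h2
    have := HasFDerivAt.fun_sum (fun μ (_ : μ ∈ Finset.univ) => hterm μ)
    exact this.fderiv
  have hsingle : ∀ (A : (Fin m → ℝ) →L[ℝ] ℝ) (w : Fin m → ℝ),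
      A w = ∑ μ : Fin m, w μ * A (Pi.single μ (1:ℝ)) := by
    intro A w
    have hw : w = ∑ μ : Fin m, w μ • (Pi.single μ (1:ℝ) : Fin m → ℝ) := by
      ext i
      simp [Pi.single_apply]
    conv_lhs => rw [hw]
    rw [map_sum]
    simp [smul_eq_mul]
  clear_value ℓ F F' φ ω Dg
  have hDval : ∀ x ∈ U, (∫ t in (0:ℝ)..1, F' x t) = ω x := by
    intro x hx
    have hcont' : Continuous (fun t => F' x t) :=
      hF'C.continuous.comp (Continuous.prodMk_right x)
    have hint : IntervalIntegrable (fun t => F' x t) MeasureTheory.volume 0 1 :=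
      hcont'.intervalIntegrable 0 1
    have hseg : ∀ t ∈ Set.Icc (0:ℝ) 1, ℓ t x ∈ U := by
      intro t ht
      have : (1 - t) • x₀ + t • x ∈ U := hconv hx₀ hx (by linarith [ht.2]) ht.1 (by ring)
      convert this using 1
      ext i
      simp [hℓdef]
      ring
    -- explicit value of `F' x t (Pi.single ν 1)` for `t ∈ [0,1]`
    have hF'apply : ∀ ν : Fin m, ∀ t ∈ Set.Icc (0:ℝ) 1,
        F' x t (Pi.single ν 1) = g (ℓ t x) ν + t * (Dg ν (ℓ t x)) (x - x₀) := by
      intro ν t ht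
      rw [hF'eq]
      simp only [ContinuousLinearMap.sum_apply, ContinuousLinearMap.add_apply,
        ContinuousLinearMap.smul_apply, ContinuousLinearMap.proj_apply,
        ContinuousLinearMap.comp_apply, ContinuousLinearMap.id_apply,
        smul_eq_mul]
      have hc : ℓ t x ∈ U := hseg t ht
      have hcl : ∀ μ : Fin m, (Dg μ (ℓ t x)) (Pi.single ν (1:ℝ))
          = (Dg ν (ℓ t x)) (Pi.single μ (1:ℝ)) := by
        intro μ
        rw [hDgdef]
        exact hclosed _ hc μ ν
      rw [Finset.sum_add_distrib]
      congr 1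
      · simp [Pi.single_apply]
      · have hterm : ∀ μ : Fin m, (x μ - x₀ μ) * (Dg μ (ℓ t x)) (t • (Pi.single ν (1:ℝ) : Fin m → ℝ))
            = t * ((x - x₀) μ * (Dg ν (ℓ t x)) (Pi.single μ (1:ℝ))) := by
          intro μ
          rw [ContinuousLinearMap.map_smul, smul_eq_mul, hcl μ]
          simp only [Pi.sub_apply]
          ring
        rw [Finset.sum_congr rfl fun μ _ => hterm μ, ← Finset.mul_sum,
          ← hsingle (Dg ν (ℓ t x)) (x - x₀)]
    -- fundamental theorem of calculus along the segment
    have happly : ∀ ν : Fin m,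
        (∫ t in (0:ℝ)..1, F' x t) (Pi.single ν (1:ℝ)) = g x ν := by
      intro ν
      rw [ContinuousLinearMap.intervalIntegral_apply hint]
      have hderiv : ∀ t ∈ Set.uIcc (0:ℝ) 1,
          HasDerivAt (fun s => s * g (ℓ s x) ν) (F' x t (Pi.single ν (1:ℝ))) t := by
        intro t ht
        rw [Set.uIcc_of_le (zero_le_one (α := ℝ))] at ht
        have hℓt : HasDerivAt (fun s : ℝ => ℓ s x) (x - x₀) t := by
          rw [hℓdef]
          simpa using ((hasDerivAt_id t).smul_const (x - x₀)).const_add x₀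
        have hgc : HasFDerivAt (fun y' => g y' ν) (Dg ν (ℓ t x)) (ℓ t x) := by
          rw [hDgdef]
          exact (((hg ν).differentiable (by simp)) (ℓ t x)).hasFDerivAt
        have h3 : HasDerivAt (fun s : ℝ => g (ℓ s x) ν)
            ((Dg ν (ℓ t x)) (x - x₀)) t := by have := hgc.comp_hasDerivAt t hℓt; exact this
        have h4 := (hasDerivAt_id' (x := t)).mul h3
        rw [hF'apply ν t ht]
        simpa [Pi.mul_def] using h4
      have hci : IntervalIntegrable (fun t => F' x t (Pi.single ν (1:ℝ)))
          MeasureTheory.volume 0 1 :=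
        (hcont'.clm_apply continuous_const).intervalIntegrable 0 1
      rw [intervalIntegral.integral_eq_sub_of_hasDerivAt hderiv hci]
      have hone : ℓ 1 x = x := by
        ext i; simp [hℓdef]
      simp [hone]
    -- identify the two continuous linear maps by evaluation
    have hω1 : ∀ μ : Fin m, ω x (Pi.single μ (1:ℝ)) = g x μ := by
      intro μ
      rw [hωdef]
      simp [Pi.single_apply]
    apply ContinuousLinearMap.ext
    intro w
    rw [hsingle _ w, hsingle (ω x) w]
    exact Finset.sum_congr rfl fun μ _ => by rw [happly μ, hω1 μ]
  -- conclusion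
  refine ⟨φ, ?_, fun x hx => ?_⟩
  swap
  · have h := hD x
    rw [hDval x hx, hωdef] at h
    exact h
  refine (contDiffOn_infty_iff_fderiv_of_isOpen hU).2
    ⟨fun y hy => (hD y).differentiableAt.differentiableWithinAt, ?_⟩
  have hωC : ContDiff ℝ (⊤ : ℕ∞) ω := by
    rw [hωdef]
    apply ContDiff.sum
    intro μ _
    exact (hg μ).smul contDiff_const
  exact hωC.contDiffOn.congr fun y hy => ((hD y).fderiv).trans (hDval y hy)

lemma jet2_contDiff {m n : ℕ} {u : (Fin m → ℝ) → Fin n → ℝ}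
    (hu : ContDiff ℝ (⊤ : ℕ∞) u) {z : (Fin m → ℝ) → Fin m → ℝ}
    (hz : ContDiff ℝ (⊤ : ℕ∞) z) : ContDiff ℝ (⊤ : ℕ∞) (jet2 u z) := by
  unfold jet2
  refine contDiff_id.prodMk (hu.prodMk (ContDiff.prodMk ?_ (ContDiff.prodMk ?_ hz)))
  · exact contDiff_pi.2 fun a => contDiff_pi.2 fun μ =>
      pd_contDiff (contDiff_pi.1 hu a)
  · exact contDiff_pi.2 fun a => contDiff_pi.2 fun μ => contDiff_pi.2 fun ν =>
      pd_contDiff (pd_contDiff (contDiff_pi.1 hu a))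

/-- Higher-order vakonomic Herglotz principle for second-order field
Lagrangians, multiplier form, over an open convex set `U ⊆ ℝᵐ`.  Sums over
multi-indices `|I| = 2` are sums over pairs `(μ, ν)` with `μ ≤ ν`. -/
theorem herglotz_second_order_vakonomic (m n : ℕ) (hm : 1 ≤ m) (hn : 1 ≤ n)
    (L : Jet2 m n → ℝ) (hL : ContDiff ℝ (⊤ : ℕ∞) L)
    (U : Set (Fin m → ℝ)) (hUopen : IsOpen U) (hUconv : Convex ℝ U)
    (u : (Fin m → ℝ) → Fin n → ℝ) (hu : ContDiff ℝ (⊤ : ℕ∞) u)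
    (z : (Fin m → ℝ) → Fin m → ℝ) (hz : ContDiff ℝ (⊤ : ℕ∞) z)
    (hconstr : ∀ x ∈ U,
      (∑ μ : Fin m, pd μ (fun y => z y μ) x) = L (jet2 u z x))
    -- dissipation coefficients `g_μ = ∂L/∂z^μ ∘ j`
    (g : (Fin m → ℝ) → Fin m → ℝ)
    (hgdef : ∀ x, ∀ μ : Fin m, g x μ = Lz L μ (jet2 u z x)) :
    -- (1) existence of a Lagrange multiplier satisfying the Euler–Lagrange
    -- equations of the extended Lagrangian together with the multiplier equation
    (∃ lam : (Fin m → ℝ) → ℝ, ContDiffOn ℝ (⊤ : ℕ∞) lam U ∧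
      (∀ x ∈ U, lam x ≠ 1) ∧
      (∀ x ∈ U, ∀ ν : Fin m, pd ν lam x = (1 - lam x) * g x ν) ∧
      (∀ x ∈ U, ∀ a : Fin n,
        (1 - lam x) * Lu L a (jet2 u z x)
          - (∑ μ : Fin m,
              pd μ (fun y => (1 - lam y) * Lw L a μ (jet2 u z y)) x)
          + (∑ p ∈ Finset.univ.filter (fun p : Fin m × Fin m => p.1 ≤ p.2),
              pd p.1 (fun y =>
                pd p.2 (fun y' => (1 - lam y') * LW L a p.1 p.2 (jet2 u z y')) y) x)
          = 0))
    ↔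
    -- (2) closed action dependence and the second-order Herglotz field equations
    ((∀ x ∈ U, ∀ μ ν : Fin m,
        pd ν (fun y => g y μ) x = pd μ (fun y => g y ν) x) ∧
      (∀ x ∈ U, ∀ a : Fin n,
        Lu L a (jet2 u z x)
          - (∑ μ : Fin m, T g μ (fun y => Lw L a μ (jet2 u z y)) x)
          + (∑ p ∈ Finset.univ.filter (fun p : Fin m × Fin m => p.1 ≤ p.2),
              T g p.1 (T g p.2 (fun y => LW L a p.1 p.2 (jet2 u z y))) x)
          = 0)) := by
  classical
  have hjet : ContDiff ℝ (⊤ : ℕ∞) (jet2 u z) := jet2_contDiff hu hz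
  have hcomp : ∀ v : Jet2 m n,
      ContDiff ℝ (⊤ : ℕ∞) (fun y => fderiv ℝ L (jet2 u z y) v) := fun v =>
    ((hL.fderiv_right (by simp)).clm_apply contDiff_const).comp hjet
  have hgC : ∀ μ : Fin m, ContDiff ℝ (⊤ : ℕ∞) (fun y => g y μ) := by
    intro μ
    have : (fun y => g y μ) = fun y => Lz L μ (jet2 u z y) :=
      funext fun y => hgdef y μ
    rw [this]
    exact hcomp _
  have hLwC : ∀ (a : Fin n) (μ : Fin m),
      ContDiff ℝ (⊤ : ℕ∞) (fun y => Lw L a μ (jet2 u z y)) := fun a μ => hcomp _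
  have hLWC : ∀ (a : Fin n) (μ ν : Fin m),
      ContDiff ℝ (⊤ : ℕ∞) (fun y => LW L a μ ν (jet2 u z y)) := fun a μ ν => hcomp _
  constructor
  · rintro ⟨lam, hlamC, hlam1, hlamEq, hEL⟩
    have hlamD : ∀ y ∈ U, DifferentiableAt ℝ lam y := fun y hy =>
      ((hlamC y hy).contDiffAt (hUopen.mem_nhds hy)).differentiableAt (by simp)
    have hne : ∀ x ∈ U, (1 : ℝ) - lam x ≠ 0 := fun x hx =>
      sub_ne_zero.2 (Ne.symm (hlam1 x hx))
    constructor
    · intro x hx μ ν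
      have hCA : ContDiffAt ℝ 2 lam x :=
        ((hlamC x hx).contDiffAt (hUopen.mem_nhds hx)).of_le (by norm_cast)
      have hswap := pd_comm hCA μ ν
      have hcalc : ∀ κ τ : Fin m, pd τ (pd κ lam) x =
          -((1 - lam x) * g x τ) * g x κ
            + (1 - lam x) * pd τ (fun y => g y κ) x := by
        intro κ τ
        have hev : (pd κ lam) =ᶠ[nhds x] (fun y => (1 - lam y) * g y κ) := by
          filter_upwards [hUopen.mem_nhds hx] with y hy
          exact hlamEq y hy κ
        rw [pd_congr hev,
          pd_mul (f := fun y => 1 - lam y) ((differentiableAt_const (1:ℝ)).sub (hlamD x hx))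
            ((hgC κ).differentiable (by simp) x),
          pd_one_sub (hlamD x hx), hlamEq x hx τ]
      rw [hcalc ν μ, hcalc μ ν] at hswap
      have key : (1 - lam x) * pd ν (fun y => g y μ) x
          = (1 - lam x) * pd μ (fun y => g y ν) x := by linear_combination -hswap
      exact mul_left_cancel₀ (hne x hx) key
    · intro x hx a
      have h0 := hEL x hx a
      rw [EL_factor hUopen hx hlamD (fun y hy μ => hlamEq y hy μ) hgC
        (fun y => Lu L a (jet2 u z y))
        (fun μ y => Lw L a μ (jet2 u z y)) (fun μ => hLwC a μ)
        (fun μ ν y => LW L a μ ν (jet2 u z y)) (fun μ ν => hLWC a μ ν)] at h0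
      exact (mul_eq_zero.1 h0).resolve_left (hne x hx)
  · rintro ⟨hclosed, hHerg⟩
    rcases U.eq_empty_or_nonempty with hUe | ⟨x₀, hx₀⟩
    · refine ⟨fun _ => 0, contDiffOn_const, ?_, ?_, ?_⟩ <;>
        · intro x hx
          rw [hUe] at hx
          exact absurd hx (Set.notMem_empty x)
    · obtain ⟨φ, hφC, hφD⟩ := exists_potential hUopen hUconv hgC hclosed hx₀
      set lam : (Fin m → ℝ) → ℝ := fun y => 1 - Real.exp (-φ y) with hlamdef
      have hφdiff : ∀ x ∈ U, DifferentiableAt ℝ φ x := fun x hx =>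
        (hφD x hx).differentiableAt
      have hpdφ : ∀ x ∈ U, ∀ ν : Fin m, pd ν φ x = g x ν := by
        intro x hx ν
        rw [show pd ν φ x = fderiv ℝ φ x (Pi.single ν 1) from rfl, (hφD x hx).fderiv]
        simp [Pi.single_apply]
      have h1lam : ∀ x, 1 - lam x = Real.exp (-φ x) := by
        intro x
        rw [hlamdef]
        ring
      have hlamne : ∀ x ∈ U, lam x ≠ 1 := by
        intro x _ h
        have h2 : (1:ℝ) - lam x = 0 := by rw [h]; ring
        rw [h1lam x] at h2
        exact Real.exp_ne_zero _ h2
      have hlamDiff : ∀ x ∈ U, DifferentiableAt ℝ lam x := by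
        intro x hx
        rw [hlamdef]
        exact (differentiableAt_const (1:ℝ)).sub ((hφdiff x hx).neg.exp)
      have hpdlam : ∀ x ∈ U, ∀ ν : Fin m, pd ν lam x = (1 - lam x) * g x ν := by
        intro x hx ν
        have hexp : HasDerivAt Real.exp (Real.exp (-φ x)) (-φ x) :=
          Real.hasDerivAt_exp _
        have hneg : HasFDerivAt (fun y => -φ y) (-(fderiv ℝ φ x)) x :=
          (hφdiff x hx).hasFDerivAt.neg
        have hcomp2 := (hexp.comp_hasFDerivAt x hneg).const_sub (1:ℝ)
        have hlamF : HasFDerivAt lam (-(Real.exp (-φ x) • -(fderiv ℝ φ x))) x := by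
          rw [hlamdef]
          exact hcomp2
        rw [show pd ν lam x = fderiv ℝ lam x (Pi.single ν 1) from rfl, hlamF.fderiv,
          h1lam x]
        have := hpdφ x hx ν
        rw [show pd ν φ x = fderiv ℝ φ x (Pi.single ν 1) from rfl] at this
        simp [this]
      have hlamC : ContDiffOn ℝ (⊤ : ℕ∞) lam U := by
        rw [hlamdef]
        exact contDiffOn_const.sub (Real.contDiff_exp.comp_contDiffOn hφC.neg)
      refine ⟨lam, hlamC, hlamne, hpdlam, ?_⟩
      intro x hx a
      rw [EL_factor hUopen hx hlamDiff (fun y hy μ => hpdlam y hy μ) hgC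
        (fun y => Lu L a (jet2 u z y))
        (fun μ y => Lw L a μ (jet2 u z y)) (fun μ => hLwC a μ)
        (fun μ ν y => LW L a μ ν (jet2 u z y)) (fun μ ν => hLWC a μ ν),
        hHerg x hx a, mul_zero]
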